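/- arXiv:1211.6553 — 7 statements merged into one kernel-verified Lean document; each statement's English description precedes it below -/
import Mathlib

section
/- Let T be a DFS tree of a 2-edge-connected graph G and let {uv, xy} be a 2-edge-cut of G. Then the four vertices u, v, x, y all lie on a common leaf-to-root path of T, i.e., they are pairwise comparable in the ancestor order of T. -/
set_option linter.unusedSectionVars false


open SimpleGraph

variable {V : Type*} [Fintype V] [DecidableEq V]

/-- `G` is `k`-edge-connected. -/
def EdgeConnGE (G : SimpleGraph V) (k : ℕ) : Prop :=
  2 ≤ Fintype.card V ∧ ∀ S : Finset (Sym2 V), S.card < k → (G.deleteEdges ↑S).Connected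

/-- A DFS tree of `G`: a rooted spanning tree (given by a parent function) whose
tree edges are edges of `G` and such that every edge of `G` joins two
ancestor-comparable vertices. -/
structure DFSTree (G : SimpleGraph V) where
  root : V
  parent : V → V
  parent_root : parent root = root
  parent_adj : ∀ v, v ≠ root → G.Adj v (parent v)
  reaches_root : ∀ v, ∃ n, parent^[n] v = root
  dfs_edge : ∀ u v, G.Adj u v → (∃ n, parent^[n] v = u) ∨ (∃ n, parent^[n] u = v)

/-- `a` is an ancestor of `b` in the DFS tree (possibly `a = b`). -/
def DFSTree.Anc {G : SimpleGraph V} (t : DFSTree G) (a b : V) : Prop :=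
  ∃ n, t.parent^[n] b = a

/-- `e` is a tree edge of the DFS tree. -/
def DFSTree.TreeEdge {G : SimpleGraph V} (t : DFSTree G) (e : Sym2 V) : Prop :=
  ∃ v, v ≠ t.root ∧ e = s(v, t.parent v)

/-- A 2-edge-cut: two distinct edges of `G` whose removal disconnects `G`. -/
def Is2EdgeCut (G : SimpleGraph V) (e₁ e₂ : Sym2 V) : Prop :=
  e₁ ∈ G.edgeSet ∧ e₂ ∈ G.edgeSet ∧ e₁ ≠ e₂ ∧ ¬ (G.deleteEdges {e₁, e₂}).Connected

namespace DFSTree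

variable {G : SimpleGraph V} (t : DFSTree G)

lemma parent_iterate_root (n : ℕ) : t.parent^[n] t.root = t.root :=
  Function.iterate_fixed t.parent_root n

lemma anc_refl (a : V) : t.Anc a a := ⟨0, rfl⟩

lemma anc_trans {a b c : V} (h1 : t.Anc a b) (h2 : t.Anc b c) : t.Anc a c := by
  obtain ⟨m, hm⟩ := h1; obtain ⟨n, hn⟩ := h2
  exact ⟨m + n, by rw [Function.iterate_add_apply, hn, hm]⟩

lemma anc_root (a : V) : t.Anc t.root a := t.reaches_root a

lemma eq_root_of_anc {a : V} (h : t.Anc a t.root) : a = t.root := by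
  obtain ⟨n, hn⟩ := h; rw [t.parent_iterate_root] at hn; exact hn.symm

lemma anc_antisymm {a b : V} (h1 : t.Anc a b) (h2 : t.Anc b a) : a = b := by
  obtain ⟨m, hm⟩ := h1; obtain ⟨n, hn⟩ := h2
  have hc : t.parent^[n + m] b = b := by
    rw [Function.iterate_add_apply, hm, hn]
  rcases Nat.eq_zero_or_pos (n + m) with h0 | hpos
  · have hm0 : m = 0 := by omega
    rw [hm0] at hm
    exact (by simpa using hm : b = a).symm
  · obtain ⟨k, hk⟩ := t.reaches_root b
    have hcyc : ∀ j, t.parent^[j * (n + m)] b = b := by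
      intro j
      induction j with
      | zero => simp
      | succ i ih => rw [Nat.succ_mul, Function.iterate_add_apply, hc, ih]
    have hle : k ≤ k * (n + m) := Nat.le_mul_of_pos_right k hpos
    have hb : b = t.root := by
      calc b = t.parent^[k * (n + m)] b := (hcyc k).symm
        _ = t.parent^[k * (n + m) - k] (t.parent^[k] b) := by
            rw [← Function.iterate_add_apply, Nat.sub_add_cancel hle]
        _ = t.root := by rw [hk, t.parent_iterate_root]
    rw [hb, t.parent_iterate_root] at hm
    rw [← hm, hb]

lemma anc_chain {a b c : V} (h1 : t.Anc a c) (h2 : t.Anc b c) :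
    t.Anc a b ∨ t.Anc b a := by
  obtain ⟨m, hm⟩ := h1; obtain ⟨n, hn⟩ := h2
  rcases le_total m n with h | h
  · right
    exact ⟨n - m, by rw [← hm, ← Function.iterate_add_apply, Nat.sub_add_cancel h]; exact hn⟩
  · left
    exact ⟨m - n, by rw [← hn, ← Function.iterate_add_apply, Nat.sub_add_cancel h]; exact hm⟩

lemma anc_parent {a w : V} (h : t.Anc a w) (hne : w ≠ a) : t.Anc a (t.parent w) := by
  obtain ⟨n, hn⟩ := h
  cases n with
  | zero => simp at hn; exact absurd hn hne
  | succ k => exact ⟨k, by rw [← Function.iterate_succ_apply]; exact hn⟩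

lemma parent_anc (w : V) : t.Anc (t.parent w) w := ⟨1, rfl⟩

lemma reach_up (H : SimpleGraph V) (S : Set V) (c : V)
    (hstep : ∀ w, w ∈ S → w ≠ c → t.parent w ∈ S ∧ H.Adj w (t.parent w)) :
    ∀ n w, w ∈ S → t.parent^[n] w = c → H.Reachable w c := by
  intro n
  induction n with
  | zero =>
      intro w _ h
      simp only [Function.iterate_zero_apply] at h
      exact h ▸ Reachable.refl w
  | succ k ih =>
      intro w hw hn
      by_cases hwc : w = c
      · exact hwc ▸ Reachable.refl w
      · obtain ⟨hpS, hadj⟩ := hstep w hw hwc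
        exact hadj.reachable.trans
          (ih (t.parent w) hpS (by rwa [Function.iterate_succ_apply] at hn))

end DFSTree

lemma exists_cross {H : SimpleGraph V} {S : Set V} :
    ∀ {p q : V}, H.Walk p q → p ∈ S → q ∉ S →
      ∃ c d, H.Adj c d ∧ c ∈ S ∧ d ∉ S := by
  intro p q w
  induction w with
  | nil => intro hp hq; exact absurd hp hq
  | @cons p' m q' h w' ih =>
      intro hp hq
      by_cases hm : m ∈ S
      · exact ih hm hq
      · exact ⟨p', m, h, hp, hm⟩

lemma core (G : SimpleGraph V) (t : DFSTree G) (h2 : EdgeConnGE G 2)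
    {a va b vb : V} (ha : G.Adj a va) (hva : t.Anc va a)
    (hb : G.Adj b vb) (hvb : t.Anc vb b)
    (hcut : ¬ (G.deleteEdges {s(a, va), s(b, vb)}).Connected) :
    t.Anc a b ∨ t.Anc b a := by
  by_contra hcon
  push_neg at hcon
  obtain ⟨hab, hba⟩ := hcon
  set G'' := G.deleteEdges {s(a, va), s(b, vb)} with hG''def
  have hane : a ≠ va := ha.ne
  have hbne : b ≠ vb := hb.ne
  have hvaA : ¬ t.Anc a va := fun h => hane (t.anc_antisymm h hva)
  have hvbB : ¬ t.Anc b vb := fun h => hbne (t.anc_antisymm h hvb)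
  have hvbA : ¬ t.Anc a vb := fun h => hab (t.anc_trans h hvb)
  have hvaB : ¬ t.Anc b va := fun h => hba (t.anc_trans h hva)
  have haroot : a ≠ t.root := fun h => hab (h ▸ t.anc_root b)
  have hbroot : b ≠ t.root := fun h => hba (h ▸ t.anc_root a)
  have hrootA : ¬ t.Anc a t.root := fun h => haroot (t.eq_root_of_anc h)
  have hrootB : ¬ t.Anc b t.root := fun h => hbroot (t.eq_root_of_anc h)
  have hdisj : ∀ w, t.Anc a w → t.Anc b w → False := fun w h1 h2 =>
    (t.anc_chain h1 h2).elim hab hba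
  -- edges of G leaving the subtree of a don't go into the subtree of b
  have hbdA : ∀ w z, t.Anc a w → G.Adj w z → ¬ t.Anc a z → ¬ t.Anc b z := by
    intro w z hw hadj hz hzB
    rcases t.dfs_edge w z hadj with hc | hc
    · exact hz (t.anc_trans hw hc)
    · rcases t.anc_chain hw hc with h | h
      · exact hz h
      · exact hba (t.anc_trans hzB h)
  have hbdB : ∀ w z, t.Anc b w → G.Adj w z → ¬ t.Anc b z → ¬ t.Anc a z := by
    intro w z hw hadj hz hzA
    rcases t.dfs_edge w z hadj with hc | hc
    · exact hz (t.anc_trans hw hc)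
    · rcases t.anc_chain hw hc with h | h
      · exact hz h
      · exact hab (t.anc_trans hzA h)
  -- vertices outside both subtrees reach the root in G''
  have hout : ∀ w, ¬ t.Anc a w → ¬ t.Anc b w → G''.Reachable w t.root := by
    intro w hwA hwB
    obtain ⟨n, hn⟩ := t.reaches_root w
    refine t.reach_up G'' {z | ¬ t.Anc a z ∧ ¬ t.Anc b z} t.root ?_ n w ⟨hwA, hwB⟩ hn
    rintro z ⟨hzA, hzB⟩ hzr
    have hpA : ¬ t.Anc a (t.parent z) := fun h => hzA (t.anc_trans h (t.parent_anc z))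
    have hpB : ¬ t.Anc b (t.parent z) := fun h => hzB (t.anc_trans h (t.parent_anc z))
    refine ⟨⟨hpA, hpB⟩, ?_⟩
    rw [hG''def, deleteEdges_adj]
    refine ⟨t.parent_adj z hzr, ?_⟩
    intro hmem
    simp only [Set.mem_insert_iff, Set.mem_singleton_iff] at hmem
    rcases hmem with h | h
    · rcases Sym2.eq_iff.mp h with ⟨h1, _⟩ | ⟨_, h2⟩
      · exact hzA (by rw [h1]; exact t.anc_refl a)
      · exact hpA (by rw [h2]; exact t.anc_refl a)
    · rcases Sym2.eq_iff.mp h with ⟨h1, _⟩ | ⟨_, h2⟩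
      · exact hzB (by rw [h1]; exact t.anc_refl b)
      · exact hpB (by rw [h2]; exact t.anc_refl b)
  -- vertices in the subtree of a reach a in G''
  have hAreach : ∀ w, t.Anc a w → G''.Reachable w a := by
    intro w hw
    obtain ⟨n, hn⟩ := id hw
    refine t.reach_up G'' {z | t.Anc a z} a ?_ n w hw hn
    intro z hz hza
    have hpz : t.Anc a (t.parent z) := t.anc_parent hz hza
    have hzr : z ≠ t.root := fun h => hrootA (h ▸ hz)
    refine ⟨hpz, ?_⟩
    rw [hG''def, deleteEdges_adj]
    refine ⟨t.parent_adj z hzr, ?_⟩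
    intro hmem
    simp only [Set.mem_insert_iff, Set.mem_singleton_iff] at hmem
    rcases hmem with h | h
    · rcases Sym2.eq_iff.mp h with ⟨_, h2⟩ | ⟨h1, _⟩
      · exact hvaA (h2 ▸ hpz)
      · exact hvaA (h1 ▸ hz)
    · rcases Sym2.eq_iff.mp h with ⟨h1, _⟩ | ⟨h1, _⟩
      · exact hdisj z hz (by rw [h1]; exact t.anc_refl b)
      · exact hvbA (h1 ▸ hz)
  -- vertices in the subtree of b reach b in G''
  have hBreach : ∀ w, t.Anc b w → G''.Reachable w b := by
    intro w hw
    obtain ⟨n, hn⟩ := id hw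
    refine t.reach_up G'' {z | t.Anc b z} b ?_ n w hw hn
    intro z hz hzb
    have hpz : t.Anc b (t.parent z) := t.anc_parent hz hzb
    have hzr : z ≠ t.root := fun h => hrootB (h ▸ hz)
    refine ⟨hpz, ?_⟩
    rw [hG''def, deleteEdges_adj]
    refine ⟨t.parent_adj z hzr, ?_⟩
    intro hmem
    simp only [Set.mem_insert_iff, Set.mem_singleton_iff] at hmem
    rcases hmem with h | h
    · rcases Sym2.eq_iff.mp h with ⟨h1, _⟩ | ⟨h1, _⟩
      · exact hdisj z (by rw [h1]; exact t.anc_refl a) hz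
      · exact hvaB (h1 ▸ hz)
    · rcases Sym2.eq_iff.mp h with ⟨_, h2⟩ | ⟨h1, _⟩
      · exact hvbB (h2 ▸ hpz)
      · exact hvbB (h1 ▸ hz)
  -- a boundary edge of the subtree of a, present in G''
  obtain ⟨c, d, hcd'', hcA, hdA, hdB⟩ :
      ∃ c d, G''.Adj c d ∧ t.Anc a c ∧ ¬ t.Anc a d ∧ ¬ t.Anc b d := by
    have hG1 := h2.2 {s(a, va)} (by simp)
    obtain ⟨p⟩ := hG1.preconnected a t.root
    obtain ⟨c, d, hcd, hcA, hdA⟩ :=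
      exists_cross (S := {z | t.Anc a z}) p (t.anc_refl a) hrootA
    rw [deleteEdges_adj] at hcd
    obtain ⟨hcdG, hcd1⟩ := hcd
    have hdB : ¬ t.Anc b d := hbdA c d hcA hcdG hdA
    refine ⟨c, d, ?_, hcA, hdA, hdB⟩
    rw [hG''def, deleteEdges_adj]
    refine ⟨hcdG, ?_⟩
    intro hmem
    simp only [Set.mem_insert_iff, Set.mem_singleton_iff] at hmem
    rcases hmem with h | h
    · exact hcd1 (by simp [h])
    · rcases Sym2.eq_iff.mp h with ⟨h1, _⟩ | ⟨h1, _⟩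
      · exact hdisj c hcA (by rw [h1]; exact t.anc_refl b)
      · exact hvbA (h1 ▸ hcA)
  -- a boundary edge of the subtree of b, present in G''
  obtain ⟨c', d', hcd''', hcB, hdA', hdB'⟩ :
      ∃ c d, G''.Adj c d ∧ t.Anc b c ∧ ¬ t.Anc a d ∧ ¬ t.Anc b d := by
    have hG2 := h2.2 {s(b, vb)} (by simp)
    obtain ⟨p⟩ := hG2.preconnected b t.root
    obtain ⟨c, d, hcd, hcB, hdB⟩ :=
      exists_cross (S := {z | t.Anc b z}) p (t.anc_refl b) hrootB
    rw [deleteEdges_adj] at hcd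
    obtain ⟨hcdG, hcd2⟩ := hcd
    have hdA : ¬ t.Anc a d := hbdB c d hcB hcdG hdB
    refine ⟨c, d, ?_, hcB, hdA, hdB⟩
    rw [hG''def, deleteEdges_adj]
    refine ⟨hcdG, ?_⟩
    intro hmem
    simp only [Set.mem_insert_iff, Set.mem_singleton_iff] at hmem
    rcases hmem with h | h
    · rcases Sym2.eq_iff.mp h with ⟨h1, _⟩ | ⟨h1, _⟩
      · exact hdisj c (by rw [h1]; exact t.anc_refl a) hcB
      · exact hvaB (h1 ▸ hcB)
    · exact hcd2 (by simp [h])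
  -- now G'' is connected, contradiction
  have hne : Nonempty V := Fintype.card_pos_iff.mp (by have := h2.1; omega)
  have key : ∀ w, G''.Reachable w t.root := by
    intro w
    by_cases hwA : t.Anc a w
    · exact (hAreach w hwA).trans
        (((hAreach c hcA).symm).trans (hcd''.reachable.trans (hout d hdA hdB)))
    · by_cases hwB : t.Anc b w
      · exact (hBreach w hwB).trans
          (((hBreach c' hcB).symm).trans (hcd'''.reachable.trans (hout d' hdA' hdB')))
      · exact hout w hwA hwB
  exact hcut ((connected_iff _).mpr ⟨fun p q => (key p).trans (key q).symm, hne⟩)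

/-- For every 2-edge-cut `{uv, xy}` of a 2-edge-connected graph, the four
vertices `u, v, x, y` are pairwise comparable in the ancestor order of any
DFS tree, i.e. they all lie on a common leaf-to-root path. -/
theorem stmt_3 (G : SimpleGraph V) (t : DFSTree G) (h2 : EdgeConnGE G 2)
    (u v x y : V) (huv : G.Adj u v) (hxy : G.Adj x y)
    (hcut : Is2EdgeCut G s(u, v) s(x, y)) :
    (t.Anc u v ∨ t.Anc v u) ∧ (t.Anc u x ∨ t.Anc x u) ∧ (t.Anc u y ∨ t.Anc y u) ∧
    (t.Anc v x ∨ t.Anc x v) ∧ (t.Anc v y ∨ t.Anc y v) ∧ (t.Anc x y ∨ t.Anc y x) := by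
  obtain ⟨-, -, -, hdis⟩ := hcut
  obtain ⟨a, va, hEa, hadja, hvaa, hua, hva2⟩ :
      ∃ a va, s(u, v) = s(a, va) ∧ G.Adj a va ∧ t.Anc va a ∧ t.Anc u a ∧ t.Anc v a := by
    rcases t.dfs_edge u v huv with hc | hc
    · exact ⟨v, u, Sym2.eq_swap, huv.symm, hc, hc, t.anc_refl v⟩
    · exact ⟨u, v, rfl, huv, hc, t.anc_refl u, hc⟩
  obtain ⟨b, vb, hEb, hadjb, hvbb, hxb, hyb⟩ :
      ∃ b vb, s(x, y) = s(b, vb) ∧ G.Adj b vb ∧ t.Anc vb b ∧ t.Anc x b ∧ t.Anc y b := by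
    rcases t.dfs_edge x y hxy with hc | hc
    · exact ⟨y, x, Sym2.eq_swap, hxy.symm, hc, hc, t.anc_refl y⟩
    · exact ⟨x, y, rfl, hxy, hc, t.anc_refl x, hc⟩
  rw [hEa, hEb] at hdis
  have hcomp := core G t h2 hadja hvaa hadjb hvbb hdis
  obtain ⟨top, hu, hv, hx, hy⟩ :
      ∃ p, t.Anc u p ∧ t.Anc v p ∧ t.Anc x p ∧ t.Anc y p := by
    rcases hcomp with h | h
    · exact ⟨b, t.anc_trans hua h, t.anc_trans hva2 h, hxb, hyb⟩
    · exact ⟨a, hua, hva2, t.anc_trans hxb h, t.anc_trans hyb h⟩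
  exact ⟨t.anc_chain hu hv, t.anc_chain hu hx, t.anc_chain hu hy,
    t.anc_chain hv hx, t.anc_chain hv hy, t.anc_chain hx hy⟩
end

section
/- Let T be a DFS tree of a 2-edge-connected graph G, and let {uv, xy} be a 2-edge-cut where uv is a back-edge with u an ancestor of v. Then the edge xy lies on the tree path from v to u, and the vertices on the tree path from v down to x and those on the tree path from y up to u lie in different components of G - uv - xy. -/
open SimpleGraph

variable {V : Type*} [Fintype V] [DecidableEq V]

namespace DFSTreeAux

variable {V : Type*} [Fintype V] [DecidableEq V] {G : SimpleGraph V}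

lemma iterate_root (t : DFSTree G) (n : ℕ) : t.parent^[n] t.root = t.root := by
  induction n with
  | zero => rfl
  | succ n ih => rw [Function.iterate_succ_apply', ih, t.parent_root]

lemma eq_root_of_cycle (t : DFSTree G) {w : V} {k : ℕ} (hk : k ≠ 0)
    (h : t.parent^[k] w = w) : w = t.root := by
  obtain ⟨n, hn⟩ := t.reaches_root w
  have hcyc : ∀ m, t.parent^[k * m] w = w := by
    intro m
    induction m with
    | zero => rfl
    | succ m ih => rw [Nat.mul_succ, Function.iterate_add_apply, h, ih]
  have hle : n ≤ k * n := Nat.le_mul_of_pos_left n (Nat.pos_of_ne_zero hk)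
  have : t.parent^[k * n] w = t.root := by
    calc t.parent^[k * n] w = t.parent^[(k * n - n) + n] w := by rw [Nat.sub_add_cancel hle]
      _ = t.parent^[k * n - n] (t.parent^[n] w) := Function.iterate_add_apply _ _ _ _
      _ = t.root := by rw [hn, iterate_root]
  rw [hcyc n] at this
  exact this

/-- A tree edge other than the two deleted ones survives in the deleted graph. -/
lemma tree_edge_in_del (t : DFSTree G) {u v c d : V}
    (hback : ¬ t.TreeEdge s(u, v)) (hpc : t.parent c = d)
    {a : V} (ha : a ≠ t.root) (hac : a ≠ c) (had : ¬(a = d ∧ t.parent a = c)) :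
    (G.deleteEdges {s(u, v), s(c, d)}).Adj a (t.parent a) := by
  rw [SimpleGraph.deleteEdges_adj]
  refine ⟨t.parent_adj a ha, ?_⟩
  simp only [Set.mem_insert_iff, Set.mem_singleton_iff]
  push_neg
  constructor
  · intro h; exact hback ⟨a, ha, h.symm⟩
  · intro h
    rw [Sym2.eq_iff] at h
    rcases h with ⟨h1, _⟩ | ⟨h1, h2⟩
    · exact hac h1
    · exact had ⟨h1, h2⟩

lemma reach_of_anc (t : DFSTree G) {u v c d : V}
    (hback : ¬ t.TreeEdge s(u, v)) (hpc : t.parent c = d) (hcr : c ≠ t.root) :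
    ∀ n a, t.parent^[n] a = c → (G.deleteEdges {s(u, v), s(c, d)}).Reachable a c := by
  intro n
  induction n with
  | zero => intro a h; exact h ▸ SimpleGraph.Reachable.refl _
  | succ n ih =>
    intro a h
    rw [Function.iterate_succ_apply] at h
    have hac : a ≠ c := by
      rintro rfl
      exact hcr (eq_root_of_cycle t (Nat.succ_ne_zero n)
        (by rw [Function.iterate_succ_apply]; exact h))
    have har : a ≠ t.root := by
      rintro rfl
      rw [t.parent_root, iterate_root] at h
      exact hcr h.symm
    have had : ¬(a = d ∧ t.parent a = c) := by
      rintro ⟨rfl, hp⟩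
      exact hcr (eq_root_of_cycle t (k := 2) two_ne_zero
        (show t.parent (t.parent c) = c by rw [hpc, hp]))
    exact ((tree_edge_in_del t hback hpc har hac had).reachable).trans (ih _ h)

lemma reach_root_of_not_anc (t : DFSTree G) {u v c d : V}
    (hback : ¬ t.TreeEdge s(u, v)) (hpc : t.parent c = d) (hcr : c ≠ t.root) :
    ∀ n a, t.parent^[n] a = t.root → ¬ t.Anc c a →
      (G.deleteEdges {s(u, v), s(c, d)}).Reachable a t.root := by
  intro n
  induction n with
  | zero => intro a h _; exact h ▸ SimpleGraph.Reachable.refl _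
  | succ n ih =>
    intro a h hna
    by_cases hr : a = t.root
    · exact hr ▸ SimpleGraph.Reachable.refl _
    rw [Function.iterate_succ_apply] at h
    have hac : a ≠ c := fun he => hna ⟨0, he⟩
    have had : ¬(a = d ∧ t.parent a = c) := by
      rintro ⟨rfl, hp⟩
      exact hcr (eq_root_of_cycle t (k := 2) two_ne_zero
        (show t.parent (t.parent c) = c by rw [hpc, hp]))
    have hnp : ¬ t.Anc c (t.parent a) := by
      rintro ⟨m, hm⟩
      exact hna ⟨m + 1, by rw [Function.iterate_succ_apply]; exact hm⟩
    exact ((tree_edge_in_del t hback hpc hr hac had).reachable).trans (ih _ h hnp)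

lemma walk_side {H : SimpleGraph V} (t : DFSTree G) {c : V}
    (hcross : ∀ p q, H.Adj p q → (t.Anc c p ↔ t.Anc c q)) :
    ∀ {a b : V}, H.Walk a b → t.Anc c a → t.Anc c b := by
  intro a b w
  induction w with
  | nil => exact id
  | cons h _ ih => intro ha; exact ih ((hcross _ _ h).mp ha)

lemma cross_uv (t : DFSTree G) {u v c d : V}
    (hcross : ∀ p q, (G.deleteEdges {s(u, v), s(c, d)}).Adj p q → (t.Anc c p ↔ t.Anc c q)) :
    ∀ {p q : V}, (G.deleteEdges {s(c, d)}).Walk p q →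
      t.Anc c p → ¬ t.Anc c q → ¬ (t.Anc c u ↔ t.Anc c v) := by
  intro p q w
  induction w with
  | nil => intro h hn; exact absurd h hn
  | @cons p r q hadj w ih =>
    intro hp hq hiff
    by_cases hm : t.Anc c r
    · exact ih hm hq hiff
    · rw [SimpleGraph.deleteEdges_adj, Set.mem_singleton_iff] at hadj
      by_cases he : s(p, r) = s(u, v)
      · rw [Sym2.eq_iff] at he
        rcases he with ⟨rfl, rfl⟩ | ⟨rfl, rfl⟩
        · exact hm (hiff.mp hp)
        · exact hm (hiff.mpr hp)
      · have : (G.deleteEdges {s(u, v), s(c, d)}).Adj p r := by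
          rw [SimpleGraph.deleteEdges_adj]
          refine ⟨hadj.1, ?_⟩
          simp only [Set.mem_insert_iff, Set.mem_singleton_iff]
          push_neg
          exact ⟨he, hadj.2⟩
        exact hm ((hcross _ _ this).mp hp)

/-- The heart of the theorem, stated for a tree edge `c → d = parent c`. -/
lemma key {V : Type*} [Fintype V] [DecidableEq V] (G : SimpleGraph V) (t : DFSTree G)
    (h2 : EdgeConnGE G 2) (u v c d : V) (hanc : t.Anc u v)
    (hback : ¬ t.TreeEdge s(u, v)) (hpc : t.parent c = d) (hcr : c ≠ t.root)
    (hnc : ¬ (G.deleteEdges {s(u, v), s(c, d)}).Connected) :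
    t.Anc u d ∧ t.Anc c v ∧
      ∀ a b : V, t.Anc c a → t.Anc a v → t.Anc u b → t.Anc b d →
        ¬ (G.deleteEdges {s(u, v), s(c, d)}).Reachable a b := by
  have hncd : ¬ t.Anc c d := by
    rintro ⟨m, hm⟩
    exact hcr (eq_root_of_cycle t (Nat.succ_ne_zero m)
      (by rw [Function.iterate_succ_apply, hpc]; exact hm))
  -- no edge of the doubly-deleted graph crosses the subtree of c
  have hcross : ∀ p q, (G.deleteEdges {s(u, v), s(c, d)}).Adj p q →
      (t.Anc c p ↔ t.Anc c q) := by
    intro p q hpq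
    by_contra hni
    apply hnc
    have hex : ∃ p' q', (G.deleteEdges {s(u, v), s(c, d)}).Adj p' q' ∧
        t.Anc c p' ∧ ¬ t.Anc c q' := by
      by_cases hp : t.Anc c p
      · exact ⟨p, q, hpq, hp, fun hq => hni ⟨fun _ => hq, fun _ => hp⟩⟩
      · by_cases hq : t.Anc c q
        · exact ⟨q, p, hpq.symm, hq, hp⟩
        · exact absurd ⟨fun h => absurd h hp, fun h => absurd h hq⟩ hni
    obtain ⟨p', q', hadj, hp', hq'⟩ := hex
    obtain ⟨np, hnp⟩ := hp'
    obtain ⟨nq, hnq⟩ := t.reaches_root q'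
    have hreach : ∀ w, (G.deleteEdges {s(u, v), s(c, d)}).Reachable w t.root := by
      intro w
      by_cases hw : t.Anc c w
      · obtain ⟨nw, hnw⟩ := hw
        exact (reach_of_anc t hback hpc hcr nw w hnw).trans
          ((reach_of_anc t hback hpc hcr np p' hnp).symm.trans
            (hadj.reachable.trans (reach_root_of_not_anc t hback hpc hcr nq q' hnq hq')))
      · obtain ⟨nw, hnw⟩ := t.reaches_root w
        exact reach_root_of_not_anc t hback hpc hcr nw w hnw hw
    haveI : Nonempty V := ⟨t.root⟩
    exact ⟨fun a b => (hreach a).trans (hreach b).symm⟩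
  -- u and v lie on opposite sides
  have hconn' : (G.deleteEdges {s(c, d)}).Connected := by
    have := h2.2 {s(c, d)} (by simp)
    simpa using this
  obtain ⟨w⟩ := hconn'.preconnected c d
  have hnuv : ¬ (t.Anc c u ↔ t.Anc c v) := cross_uv t hcross w ⟨0, rfl⟩ hncd
  have hcu : ¬ t.Anc c u := by
    intro hcu
    apply hnuv
    obtain ⟨n, hn⟩ := id hcu
    obtain ⟨m, hm⟩ := id hanc
    refine ⟨fun _ => ⟨n + m, ?_⟩, fun _ => hcu⟩
    rw [Function.iterate_add_apply, hm]; exact hn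
  have hcv : t.Anc c v := by
    by_contra hcv
    exact hnuv ⟨fun h => absurd h hcu, fun h => absurd h hcv⟩
  obtain ⟨m, hm⟩ := hanc
  obtain ⟨k, hk⟩ := hcv
  have hkm : k + 1 ≤ m := by
    by_contra hlt
    push_neg at hlt
    have hmk : m ≤ k := Nat.lt_succ_iff.mp hlt
    exact hcu ⟨k - m, by rw [← hm, ← Function.iterate_add_apply, Nat.sub_add_cancel hmk]; exact hk⟩
  have hud : t.Anc u d := by
    refine ⟨m - (k + 1), ?_⟩
    have hd : t.parent^[k + 1] v = d := by
      rw [Function.iterate_succ_apply', hk, hpc]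
    rw [← hd, ← Function.iterate_add_apply, Nat.sub_add_cancel hkm]
    exact hm
  refine ⟨hud, ⟨k, hk⟩, ?_⟩
  intro a b ha _ _ hbd hr
  obtain ⟨j, hj⟩ := hbd
  have hncb : ¬ t.Anc c b := by
    rintro ⟨i, hi⟩
    refine hcr (eq_root_of_cycle t (k := i + j + 1) (Nat.succ_ne_zero _) ?_)
    have : t.parent^[i + j + 1] c = t.parent^[i + j] d := by
      rw [Function.iterate_add_apply, Function.iterate_one, hpc]
    rw [this, Function.iterate_add_apply, hj]
    exact hi
  obtain ⟨wab⟩ := hr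
  exact hncb (walk_side t hcross wab ha)

end DFSTreeAux

open DFSTreeAux in
/-- Let `{uv, xy}` be a 2-edge-cut of a 2-edge-connected graph `G`, where `uv` is
a back-edge of the DFS tree `t` with `u` an ancestor of `v`.  Then the edge `xy`
is a tree edge lying on the tree path from `v` to `u`, and the vertices on the
tree path from `v` up to the lower endpoint of `xy` and those on the tree path
from the upper endpoint of `xy` up to `u` lie in different components of
`G - uv - xy`. -/
theorem stmt_4 (G : SimpleGraph V) (t : DFSTree G) (h2 : EdgeConnGE G 2)
    (u v x y : V) (huv : G.Adj u v) (hxy : G.Adj x y)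
    (hback : ¬ t.TreeEdge s(u, v)) (hanc : t.Anc u v)
    (hcut : Is2EdgeCut G s(u, v) s(x, y)) :
    (t.parent x = y ∧ x ≠ t.root ∧ t.Anc u y ∧ t.Anc x v ∧
      ∀ a b : V, t.Anc x a → t.Anc a v → t.Anc u b → t.Anc b y →
        ¬ (G.deleteEdges {s(u, v), s(x, y)}).Reachable a b) ∨
    (t.parent y = x ∧ y ≠ t.root ∧ t.Anc u x ∧ t.Anc y v ∧
      ∀ a b : V, t.Anc y a → t.Anc a v → t.Anc u b → t.Anc b x →
        ¬ (G.deleteEdges {s(u, v), s(x, y)}).Reachable a b) := by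
  obtain ⟨-, -, -, hnc⟩ := hcut
  have htree : t.TreeEdge s(x, y) := by
    by_contra hnt
    apply hnc
    have hreach : ∀ n w, t.parent^[n] w = t.root →
        (G.deleteEdges {s(u, v), s(x, y)}).Reachable w t.root := by
      intro n
      induction n with
      | zero => intro w h; exact h ▸ SimpleGraph.Reachable.refl _
      | succ n ih =>
        intro w h
        by_cases hr : w = t.root
        · exact hr ▸ SimpleGraph.Reachable.refl _
        rw [Function.iterate_succ_apply] at h
        have hadj : (G.deleteEdges {s(u, v), s(x, y)}).Adj w (t.parent w) := by
          rw [SimpleGraph.deleteEdges_adj]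
          refine ⟨t.parent_adj w hr, ?_⟩
          simp only [Set.mem_insert_iff, Set.mem_singleton_iff]
          push_neg
          exact ⟨fun he => hback ⟨w, hr, he.symm⟩, fun he => hnt ⟨w, hr, he.symm⟩⟩
        exact hadj.reachable.trans (ih _ h)
    haveI : Nonempty V := ⟨t.root⟩
    refine ⟨fun a b => ?_⟩
    obtain ⟨na, hna⟩ := t.reaches_root a
    obtain ⟨nb, hnb⟩ := t.reaches_root b
    exact (hreach na a hna).trans (hreach nb b hnb).symm
  obtain ⟨w, hwr, hwe⟩ := htree
  rw [Sym2.eq_iff] at hwe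
  rcases hwe with ⟨rfl, hy⟩ | ⟨hx, rfl⟩
  · left
    obtain ⟨h3, h4, h5⟩ := key G t h2 u v x y hanc hback hy.symm hwr hnc
    exact ⟨hy.symm, hwr, h3, h4, h5⟩
  · right
    rw [show s(x, y) = s(y, x) from Sym2.eq_swap] at hnc ⊢
    obtain ⟨h3, h4, h5⟩ := key G t h2 u v y x hanc hback hx.symm hwr hnc
    exact ⟨hx.symm, hwr, h3, h4, h5⟩
end

section
/- Let e1, e2, e3 be edges of a graph G appearing in this order along a common path, such that {e1, e2} and {e2, e3} are both 2-edge-cuts of the 2-edge-connected graph G. Then {e1, e3} is also a 2-edge-cut of G. -/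
open SimpleGraph

variable {V : Type*} [Fintype V]

private lemma walk_mem_iff' {H : SimpleGraph V} {S : Set V}
    (h : ∀ x y, H.Adj x y → (x ∈ S ↔ y ∈ S)) {u v : V} (w : H.Walk u v) :
    u ∈ S ↔ v ∈ S := by
  induction w with
  | nil => exact Iff.rfl
  | cons ha _ ih => exact (h _ _ ha).trans ih

private lemma exists_cross' {H : SimpleGraph V} {S : Set V} {u v : V}
    (w : H.Walk u v) (hu : u ∈ S) (hv : v ∉ S) :
    ∃ x y, H.Adj x y ∧ x ∈ S ∧ y ∉ S := by
  induction w with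
  | nil => exact absurd hu hv
  | @cons a b c ha q ih =>
    by_cases hb : b ∈ S
    · exact ih hb hv
    · exact ⟨a, b, ha, hu, hb⟩

private lemma iff_aux1 {p q r s : Prop} (h1 : ¬(p ↔ r)) (h2 : ¬(q ↔ s)) :
    ¬(p ↔ q) ↔ ¬(r ↔ s) := by tauto

private lemma iff_aux2 {p q r s : Prop} (h1 : p ↔ r) (h2 : q ↔ s) :
    ¬(p ↔ q) ↔ ¬(r ↔ s) := by tauto

private lemma iff_aux3 {p q r s : Prop} (hp : p) (hq : ¬q) (h : r ↔ s) :
    ¬(p ↔ r) ↔ ¬¬(q ↔ s) := by tauto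

/-- If `e₁, e₂, e₃` appear in this order along a common path of the
2-edge-connected graph `G`, and both `{e₁, e₂}` and `{e₂, e₃}` are 2-edge-cuts,
then `{e₁, e₃}` is also a 2-edge-cut. -/
theorem stmt_5 (G : SimpleGraph V) (h2 : EdgeConnGE G 2)
    (e₁ e₂ e₃ : Sym2 V) (a b : V) (p : G.Walk a b) (hp : p.IsPath)
    (horder : [e₁, e₂, e₃].Sublist p.edges)
    (h12 : Is2EdgeCut G e₁ e₂) (h23 : Is2EdgeCut G e₂ e₃) :
    Is2EdgeCut G e₁ e₃ := by
  haveI : Nonempty V := Fintype.card_pos_iff.mp (lt_of_lt_of_le two_pos h2.1)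
  obtain ⟨he1, he2, h12ne, hd12⟩ := h12
  obtain ⟨-, he3, h23ne, hd23⟩ := h23
  have hnodup : [e₁, e₂, e₃].Nodup := horder.nodup hp.edges_nodup
  have h13ne : e₁ ≠ e₃ := by
    simp only [List.nodup_cons, List.mem_cons, List.mem_singleton] at hnodup
    tauto
  -- connectedness of G minus a single edge
  have hconn : ∀ e : Sym2 V, (G.deleteEdges ({e} : Set (Sym2 V))).Connected := by
    intro e
    have := h2.2 {e} (by simp)
    simpa using this
  -- extract nonreachable pairs for the two cuts
  obtain ⟨u, v, huv⟩ : ∃ u v, ¬ (G.deleteEdges {e₁, e₂}).Reachable u v := by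
    by_contra h
    push_neg at h
    exact hd12 (SimpleGraph.Connected.mk h)
  obtain ⟨u', v', huv'⟩ : ∃ u v, ¬ (G.deleteEdges {e₂, e₃}).Reachable u v := by
    by_contra h
    push_neg at h
    exact hd23 (SimpleGraph.Connected.mk h)
  set A : Set V := {w | (G.deleteEdges {e₁, e₂}).Reachable u w} with hAdef
  set C : Set V := {w | (G.deleteEdges {e₂, e₃}).Reachable u' w} with hCdef
  have huA : u ∈ A := Reachable.refl u
  have hvA : v ∉ A := huv
  have huC : u' ∈ C := Reachable.refl u'
  have hvC : v' ∉ C := huv'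
  have crossA : ∀ x y, G.Adj x y → s(x, y) ∉ ({e₁, e₂} : Set (Sym2 V)) →
      (x ∈ A ↔ y ∈ A) := by
    intro x y hxy hs
    have hadj : (G.deleteEdges {e₁, e₂}).Adj x y := by
      rw [SimpleGraph.deleteEdges_adj]; exact ⟨hxy, hs⟩
    exact ⟨fun hx => hx.trans hadj.reachable, fun hy => hy.trans hadj.symm.reachable⟩
  have crossC : ∀ x y, G.Adj x y → s(x, y) ∉ ({e₂, e₃} : Set (Sym2 V)) →
      (x ∈ C ↔ y ∈ C) := by
    intro x y hxy hs
    have hadj : (G.deleteEdges {e₂, e₃}).Adj x y := by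
      rw [SimpleGraph.deleteEdges_adj]; exact ⟨hxy, hs⟩
    exact ⟨fun hx => hx.trans hadj.reachable, fun hy => hy.trans hadj.symm.reachable⟩
  -- a crossing edge of A avoiding a given single edge
  have crossA_exists : ∀ e : Sym2 V, ∃ x y, G.Adj x y ∧ x ∈ A ∧ y ∉ A ∧
      s(x, y) ≠ e := by
    intro e
    obtain ⟨w⟩ := (hconn e).preconnected u v
    obtain ⟨x, y, hadj, hx, hy⟩ := exists_cross' w huA hvA
    rw [SimpleGraph.deleteEdges_adj] at hadj
    refine ⟨x, y, hadj.1, hx, hy, ?_⟩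
    simpa using hadj.2
  have crossC_exists : ∀ e : Sym2 V, ∃ x y, G.Adj x y ∧ x ∈ C ∧ y ∉ C ∧
      s(x, y) ≠ e := by
    intro e
    obtain ⟨w⟩ := (hconn e).preconnected u' v'
    obtain ⟨x, y, hadj, hx, hy⟩ := exists_cross' w huC hvC
    rw [SimpleGraph.deleteEdges_adj] at hadj
    refine ⟨x, y, hadj.1, hx, hy, ?_⟩
    simpa using hadj.2
  -- e₂ crosses A
  obtain ⟨x2, y2, hadj2, hx2, hy2, hne2⟩ := crossA_exists e₁
  have hse2 : s(x2, y2) = e₂ := by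
    have hs : s(x2, y2) ∈ ({e₁, e₂} : Set (Sym2 V)) := by
      by_contra h
      exact hy2 ((crossA _ _ hadj2 h).mp hx2)
    rcases hs with h | h
    · exact absurd h hne2
    · exact h
  -- e₁ crosses A
  obtain ⟨x1, y1, hadj1, hx1, hy1, hne1⟩ := crossA_exists e₂
  have hse1 : s(x1, y1) = e₁ := by
    have hs : s(x1, y1) ∈ ({e₁, e₂} : Set (Sym2 V)) := by
      by_contra h
      exact hy1 ((crossA _ _ hadj1 h).mp hx1)
    rcases hs with h | h
    · exact h
    · exact absurd h hne1
  -- e₂ crosses C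
  obtain ⟨x2', y2', hadj2', hx2', hy2', hne2'⟩ := crossC_exists e₃
  have hse2' : s(x2', y2') = e₂ := by
    have hs : s(x2', y2') ∈ ({e₂, e₃} : Set (Sym2 V)) := by
      by_contra h
      exact hy2' ((crossC _ _ hadj2' h).mp hx2')
    rcases hs with h | h
    · exact h
    · exact absurd h hne2'
  -- the symmetric difference
  set S : Set V := {w | ¬ (w ∈ A ↔ w ∈ C)} with hSdef
  have memS : ∀ w, w ∈ S ↔ ¬ (w ∈ A ↔ w ∈ C) := fun w => Iff.rfl
  -- no edge of G.deleteEdges {e₁, e₃} crosses S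
  have crossS : ∀ x y, (G.deleteEdges {e₁, e₃}).Adj x y → (x ∈ S ↔ y ∈ S) := by
    intro x y hadj
    rw [SimpleGraph.deleteEdges_adj] at hadj
    obtain ⟨hGxy, hs13⟩ := hadj
    by_cases hs2 : s(x, y) = e₂
    · -- the edge is e₂; it crosses both A and C
      have hA' : ¬ (x ∈ A ↔ y ∈ A) := by
        have heq : s(x, y) = s(x2, y2) := hs2.trans hse2.symm
        rw [Sym2.eq_iff] at heq
        rcases heq with ⟨rfl, rfl⟩ | ⟨rfl, rfl⟩
        · tauto
        · tauto
      have hC' : ¬ (x ∈ C ↔ y ∈ C) := by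
        have heq : s(x, y) = s(x2', y2') := hs2.trans hse2'.symm
        rw [Sym2.eq_iff] at heq
        rcases heq with ⟨rfl, rfl⟩ | ⟨rfl, rfl⟩
        · tauto
        · tauto
      rw [memS, memS]
      exact iff_aux1 hA' hC'
    · have hA' : x ∈ A ↔ y ∈ A := by
        apply crossA _ _ hGxy
        intro h
        rcases h with h | h
        · exact hs13 (Or.inl h)
        · exact hs2 h
      have hC' : x ∈ C ↔ y ∈ C := by
        apply crossC _ _ hGxy
        intro h
        rcases h with h | h
        · exact hs2 h
        · exact hs13 (Or.inr h)
      rw [memS, memS]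
      exact iff_aux2 hA' hC'
  -- e₁ = s(x1,y1) does not cross C
  have hCx1y1 : x1 ∈ C ↔ y1 ∈ C := by
    apply crossC _ _ hadj1
    rw [hse1]
    intro h
    rcases h with h | h
    · exact h12ne h
    · exact h13ne h
  -- exactly one of x1, y1 is in S
  have hx1y1S : x1 ∈ S ↔ y1 ∉ S := by
    rw [memS, memS]
    exact iff_aux3 hx1 hy1 hCx1y1
  refine ⟨he1, he3, h13ne, ?_⟩
  intro hc
  obtain ⟨w⟩ := hc.preconnected x1 y1
  have := walk_mem_iff' crossS w
  exact iff_not_self (this.symm.trans hx1y1S)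
end

section
/- Let T be a DFS tree of a 2-vertex-connected graph G rooted at r. For every vertex x ≠ r and every vertex t in the subtree T(x) rooted at x with t ≠ x, there is a path P from t to some vertex s outside T(x) such that all vertices of P other than s lie in T(x) - x. -/
open SimpleGraph

variable {V : Type*} [Fintype V] [DecidableEq V]

/-- `G` is 2-vertex-connected: at least 3 vertices and removing any single
vertex leaves it connected. -/
def TwoVertexConnected (G : SimpleGraph V) : Prop :=
  3 ≤ Fintype.card V ∧ ∀ w : V, (G.induce {v : V | v ≠ w}).Connected

/-- In a 2-vertex-connected graph with DFS tree `t`: for every vertex `x ≠ root`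
and every `w ≠ x` in the subtree rooted at `x`, there is a path from `w` to a
vertex `s` outside the subtree of `x` all of whose vertices other than `s` lie
in the subtree of `x` minus `x`. -/
theorem stmt_9 (G : SimpleGraph V) (h2v : TwoVertexConnected G) (t : DFSTree G)
    (x : V) (hx : x ≠ t.root) (w : V) (hw : t.Anc x w) (hwx : w ≠ x) :
    ∃ (s : V) (p : G.Walk w s), p.IsPath ∧ ¬ t.Anc x s ∧
      ∀ u ∈ p.support, u ≠ s → (t.Anc x u ∧ u ≠ x) := by
  classical
  -- root is not in the subtree of x
  have hroot : ¬ t.Anc x t.root := by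
    rintro ⟨n, hn⟩
    rw [Function.iterate_fixed t.parent_root n] at hn
    exact hx hn.symm
  -- a walk from w to root avoiding x
  have hrx : t.root ≠ x := fun h => hx h.symm
  obtain ⟨q0⟩ := ((h2v.2 x).preconnected ⟨w, hwx⟩ ⟨t.root, hrx⟩)
  let f : G.induce {v : V | v ≠ x} →g G := ⟨Subtype.val, fun {a b} h => h⟩
  have hxq : x ∉ (q0.map f).support := by
    rw [SimpleGraph.Walk.support_map]
    intro hmem
    obtain ⟨a, _, ha⟩ := List.mem_map.mp hmem
    exact a.2 ha
  -- key claim by induction on walks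
  have key : ∀ (a b : V) (q : G.Walk a b), x ∉ q.support → t.Anc x a → ¬ t.Anc x b →
      ∃ (s : V) (p : G.Walk a s), ¬ t.Anc x s ∧
        ∀ u ∈ p.support, u ≠ s → (t.Anc x u ∧ u ≠ x) := by
    intro a b q
    induction q with
    | nil => intro _ ha hb; exact absurd ha hb
    | @cons a v b hadj q ih =>
      intro hxs ha hb
      have hax : a ≠ x := by
        intro h; exact hxs (by rw [← h]; exact SimpleGraph.Walk.start_mem_support _)
      have hxq' : x ∉ q.support := fun h => hxs (by rw [SimpleGraph.Walk.support_cons]; exact List.mem_cons_of_mem _ h)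
      by_cases hv : t.Anc x v
      · obtain ⟨s, p, hs, hp⟩ := ih hxq' hv hb
        refine ⟨s, SimpleGraph.Walk.cons hadj p, hs, ?_⟩
        intro u hu hus
        rw [SimpleGraph.Walk.support_cons, List.mem_cons] at hu
        rcases hu with rfl | hu
        · exact ⟨ha, hax⟩
        · exact hp u hu hus
      · refine ⟨v, SimpleGraph.Walk.cons hadj SimpleGraph.Walk.nil, hv, ?_⟩
        intro u hu hus
        rw [SimpleGraph.Walk.support_cons, SimpleGraph.Walk.support_nil,
          List.mem_cons, List.mem_singleton] at hu
        rcases hu with rfl | rfl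
        · exact ⟨ha, hax⟩
        · exact absurd rfl hus
  obtain ⟨s, p, hs, hp⟩ := key w t.root (q0.map f) hxq hw hroot
  refine ⟨s, p.toPath, (SimpleGraph.Walk.toPath p).2, hs, ?_⟩
  intro u hu hus
  exact hp u (SimpleGraph.Walk.support_toPath_subset p hu) hus
end

section
/- Let I be a finite family of closed intervals of integers such that every two intervals in I are either disjoint or one is strictly contained in the other (a laminar family with no shared endpoints). Define two intervals [a,b] and [a',b'] to be in 'contact' if b < a' and no integer lies strictly between b and a', i.e., the right endpoint of one is immediately followed by the left endpoint of the other. Then the reflexive, symmetric and transitive closure of the contact relation is an equivalence relation each of whose classes is a set of pairwise disjoint intervals that contact consecutively (form a chain under contact). -/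
open Classical in
/-- Iterate a relation, choosing a successor while one exists. -/
noncomputable def chainIter {α : Type*} (R : α → α → Prop) (x : α) : ℕ → α
  | 0 => x
  | k+1 => if h : ∃ b, R (chainIter R x k) b then h.choose else chainIter R x k

lemma chainIter_succ {α : Type*} (R : α → α → Prop) (x : α) (k : ℕ)
    (h : ∃ b, R (chainIter R x k) b) :
    R (chainIter R x k) (chainIter R x (k+1)) := by
  rw [chainIter]
  rw [dif_pos h]
  exact h.choose_spec

lemma chainIter_zero {α : Type*} (R : α → α → Prop) (x : α) : chainIter R x 0 = x := by
  rw [chainIter]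

lemma chainIter_stuck {α : Type*} [Finite α] (R : α → α → Prop)
    (m : α → ℤ) (hm : ∀ a b, R a b → m a < m b) (x : α) :
    ∃ k, ¬ ∃ b, R (chainIter R x k) b := by
  by_contra hc
  push_neg at hc
  have smono : StrictMono fun k => m (chainIter R x k) :=
    strictMono_nat_of_lt_succ fun k => hm _ _ (chainIter_succ R x k (hc k))
  obtain ⟨a, b, hab, he⟩ := Finite.exists_ne_map_eq_of_infinite (fun k => chainIter R x k)
  exact hab (smono.injective (by simp only [he]))

/-- Two integer intervals are in contact if one begins immediately after the
other ends. -/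
def Contact (p q : ℤ × ℤ) : Prop := q.1 = p.2 + 1 ∨ p.1 = q.2 + 1

/-- For a laminar family of integer intervals with no shared endpoints, every
class of the equivalence relation generated by the contact relation is a set of
pairwise disjoint intervals that contact consecutively: the class of any
interval `p` can be enumerated as `f 0, …, f n` with consecutive intervals
adjacent (each starting right after the previous one ends). -/
theorem stmt_11 (I : Finset (ℤ × ℤ))
    (hord : ∀ p ∈ I, p.1 ≤ p.2)
    (hlam : ∀ p ∈ I, ∀ q ∈ I, p ≠ q →
      Disjoint (Set.Icc p.1 p.2) (Set.Icc q.1 q.2) ∨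
      Set.Icc p.1 p.2 ⊂ Set.Icc q.1 q.2 ∨ Set.Icc q.1 q.2 ⊂ Set.Icc p.1 p.2)
    (hends : ∀ p ∈ I, ∀ q ∈ I, p ≠ q →
      p.1 ≠ q.1 ∧ p.1 ≠ q.2 ∧ p.2 ≠ q.1 ∧ p.2 ≠ q.2) :
    ∀ p : ↥I, ∃ (n : ℕ) (f : Fin (n + 1) → ↥I),
      Function.Injective f ∧
      (∀ q : ↥I,
        Relation.EqvGen (fun a b : ↥I => Contact a.val b.val) p q ↔ q ∈ Set.range f) ∧
      (∀ i : Fin n, (f i.succ).val.1 = (f i.castSucc).val.2 + 1) ∧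
      (∀ q r : ↥I,
        Relation.EqvGen (fun a b : ↥I => Contact a.val b.val) p q →
        Relation.EqvGen (fun a b : ↥I => Contact a.val b.val) p r → q ≠ r →
        Disjoint (Set.Icc q.val.1 q.val.2) (Set.Icc r.val.1 r.val.2)) := by
  classical
  intro p
  -- `R a b` : interval `b` starts right after `a` ends.
  let R : ↥I → ↥I → Prop := fun a b => b.val.1 = a.val.2 + 1
  have hordS : ∀ a : ↥I, a.val.1 ≤ a.val.2 := fun a => hord a.val a.prop
  have Rfun : ∀ {a b c : ↥I}, R a b → R a c → b = c := by
    intro a b c hb hc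
    by_contra hne
    exact (hends b.val b.prop c.val c.prop (fun h => hne (Subtype.ext h))).1
      (hb.trans hc.symm)
  have Rinj : ∀ {a b c : ↥I}, R a c → R b c → a = b := by
    intro a b c ha hb
    by_contra hne
    exact (hends a.val a.prop b.val b.prop (fun h => hne (Subtype.ext h))).2.2.2 (by omega)
  have Rlt : ∀ {a b : ↥I}, R a b → a.val.2 < b.val.2 := by
    intro a b h
    have := hordS b
    have h' : b.val.1 = a.val.2 + 1 := h
    omega
  -- walk leftwards from p to the left end of the chain
  have hstuckL : ∃ k, ¬ ∃ b, (fun a b : ↥I => R b a) (chainIter (fun a b => R b a) p k) b :=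
    chainIter_stuck (fun a b : ↥I => R b a) (fun a => -a.val.2)
      (fun a b h => by
        have h1 : R b a := h
        have h2 := Rlt h1
        show -a.val.2 < -b.val.2
        omega) p
  let h0 : ℕ → ↥I := chainIter (fun a b : ↥I => R b a) p
  let m0 : ℕ := Nat.find hstuckL
  let l : ↥I := h0 m0
  have hC : ¬ ∃ b, R b l := Nat.find_spec hstuckL
  have hD : ∀ k < m0, R (h0 (k+1)) (h0 k) := fun k hk =>
    chainIter_succ (fun a b : ↥I => R b a) p k (not_not.mp (Nat.find_min hstuckL hk))
  -- walk rightwards from l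
  have hstuckR : ∃ k, ¬ ∃ b, R (chainIter R l k) b :=
    chainIter_stuck R (fun a => a.val.2) (fun a b h => Rlt h) l
  let g : ℕ → ↥I := chainIter R l
  let n : ℕ := Nat.find hstuckR
  have hB : ¬ ∃ b, R (g n) b := Nat.find_spec hstuckR
  have hA : ∀ k < n, R (g k) (g (k+1)) := fun k hk =>
    chainIter_succ R l k (not_not.mp (Nat.find_min hstuckR hk))
  -- the rightward walk retraces the leftward one
  have hE : ∀ k, k ≤ m0 → g k = h0 (m0 - k) := by
    intro k
    induction k with
    | zero => intro _; simp [g, h0, l, chainIter_zero]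
    | succ k ih =>
      intro hk
      have hgk := ih (by omega)
      have hj : (m0 - (k+1)) + 1 = m0 - k := by omega
      have hRj : R (h0 (m0 - k)) (h0 (m0 - (k+1))) := by
        rw [← hj]; exact hD _ (by omega)
      have hex : ∃ b, R (g k) b := ⟨h0 (m0 - (k+1)), by rw [hgk]; exact hRj⟩
      have hstep : R (g k) (g (k+1)) := chainIter_succ R l k hex
      exact Rfun hstep (by rw [hgk]; exact hRj)
  have hEx : ∀ k < m0, ∃ b, R (g k) b := by
    intro k hk
    have hgk := hE k (by omega)
    have hj : (m0 - (k+1)) + 1 = m0 - k := by omega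
    have hRj : R (h0 (m0 - k)) (h0 (m0 - (k+1))) := by
      rw [← hj]; exact hD _ (by omega)
    exact ⟨h0 (m0 - (k+1)), by rw [hgk]; exact hRj⟩
  have hF : m0 ≤ n := by
    by_contra hlt
    exact hB (hEx n (by omega))
  have hG : g m0 = p := by
    have := hE m0 le_rfl
    simpa [h0, chainIter_zero] using this
  -- ordering along the chain
  have hH : ∀ j, j ≤ n → ∀ i, i < j → (g i).val.2 < (g j).val.1 := by
    intro j
    induction j with
    | zero => intro _ i hi; omega
    | succ j ih =>
      intro hj i hi
      have h1 : (g (j+1)).val.1 = (g j).val.2 + 1 := hA j (by omega)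
      rcases Nat.lt_succ_iff_lt_or_eq.mp hi with h | h
      · have h2 := ih (by omega) i h
        have h3 := hordS (g j)
        omega
      · subst h; omega
  have hinj : Function.Injective (fun i : Fin (n+1) => g i.val) := by
    intro i j hij
    simp only at hij
    by_contra hne
    have hne' : i.val ≠ j.val := fun h => hne (Fin.ext h)
    rcases hne'.lt_or_gt with h | h
    · have h2 := hH j.val (by omega) i.val h
      have h3 := hordS (g j.val)
      rw [hij] at h2
      omega
    · have h2 := hH i.val (by omega) j.val h
      have h3 := hordS (g i.val)
      have h4 := hordS (g j.val)
      rw [hij] at h2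
      omega
  have hpmem : p ∈ Set.range (fun i : Fin (n+1) => g i.val) :=
    ⟨⟨m0, by omega⟩, hG⟩
  -- EqvGen connects everything along the chain
  have hchain : ∀ k, k ≤ n →
      Relation.EqvGen (fun a b : ↥I => Contact a.val b.val) (g 0) (g k) := by
    intro k
    induction k with
    | zero => intro _; exact Relation.EqvGen.refl _
    | succ k ih =>
      intro hk
      exact Relation.EqvGen.trans _ _ _ (ih (by omega))
        (Relation.EqvGen.rel _ _ (Or.inl (hA k (by omega))))
  have hEGp : ∀ k, k ≤ n →
      Relation.EqvGen (fun a b : ↥I => Contact a.val b.val) p (g k) := by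
    intro k hk
    have h1 := hchain m0 hF
    rw [hG] at h1
    exact Relation.EqvGen.trans _ _ _ (Relation.EqvGen.symm _ _ h1) (hchain k hk)
  -- the range of f is closed under contact
  have closure : ∀ a b : ↥I, Contact a.val b.val →
      a ∈ Set.range (fun i : Fin (n+1) => g i.val) →
      b ∈ Set.range (fun i : Fin (n+1) => g i.val) := by
    rintro a b hc ⟨i, rfl⟩
    simp only at hc ⊢
    rcases hc with hc | hc
    · -- R (g i) b
      rcases eq_or_lt_of_le (Nat.lt_succ_iff.mp i.isLt) with h | h
      · exact absurd ⟨b, show R (g n) b by rw [← h]; exact hc⟩ hB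
      · have hb : b = g (i.val + 1) := Rfun hc (hA i.val h)
        exact ⟨⟨i.val + 1, by omega⟩, hb.symm⟩
    · -- R b (g i)
      rcases Nat.eq_zero_or_pos i.val with h | h
      · have hb : R b (g i.val) := hc
        rw [h] at hb
        rw [show g 0 = l from chainIter_zero R l] at hb
        exact absurd ⟨b, hb⟩ hC
      · obtain ⟨k, hk⟩ : ∃ k, i.val = k + 1 := ⟨i.val - 1, by omega⟩
        have hRk : R (g k) (g (k+1)) := hA k (by omega)
        have hb : b = g k := Rinj (show R b (g (k+1)) by rw [← hk]; exact hc) hRk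
        exact ⟨⟨k, by omega⟩, hb.symm⟩
  have hiff : ∀ q : ↥I,
      Relation.EqvGen (fun a b : ↥I => Contact a.val b.val) p q ↔
      q ∈ Set.range (fun i : Fin (n+1) => g i.val) := by
    intro q
    constructor
    · intro hq
      have hEquiv : Equivalence (fun a b : ↥I =>
          (a ∈ Set.range (fun i : Fin (n+1) => g i.val) ↔
           b ∈ Set.range (fun i : Fin (n+1) => g i.val))) :=
        ⟨fun _ => Iff.rfl, Iff.symm, Iff.trans⟩
      have := (hEquiv.eqvGen_iff).mp (Relation.EqvGen.mono (fun a b hab =>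
        ⟨closure a b hab, closure b a (Or.symm hab)⟩) _ _ hq)
      exact this.mp hpmem
    · rintro ⟨i, rfl⟩
      exact hEGp i.val (Nat.lt_succ_iff.mp i.isLt)
  refine ⟨n, fun i : Fin (n+1) => g i.val, hinj, hiff, ?_, ?_⟩
  · intro i
    exact hA i.val i.isLt
  · intro q r hq hr hne
    obtain ⟨i, rfl⟩ := (hiff q).mp hq
    obtain ⟨j, rfl⟩ := (hiff r).mp hr
    have hij : i.val ≠ j.val := fun h =>
      hne (congrArg (fun i : Fin (n+1) => g i.val) (Fin.ext h))
    rcases hij.lt_or_gt with h | h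
    · have h2 := hH j.val (by omega) i.val h
      exact Set.disjoint_left.mpr fun x hx hy => by
        simp only [Set.mem_Icc] at hx hy; omega
    · have h2 := hH i.val (by omega) j.val h
      exact Set.disjoint_right.mpr fun x hx hy => by
        simp only [Set.mem_Icc] at hx hy; omega
end

section
/- Let I be a finite set of closed real intervals with pairwise distinct endpoints. Say intervals [a,b] and [a',b'] overlap if a < a' < b < b' or a' < a < b' < b. For an interval J, if the set of right neighbors R(J) = { J' : J and J' overlap and J' extends further right } is nonempty, call the element of R(J) with leftmost left endpoint the immediate right neighbor of J; define immediate left neighbors symmetrically. Then the graph connecting each interval to its immediate left and immediate right neighbor (when they exist) has exactly the same connected components as the overlap graph of I. -/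
open SimpleGraph

/-- Interval `p` overlaps interval `q` "to the left": `p.1 < q.1 < p.2 < q.2`. -/
def Ov (p q : ℝ × ℝ) : Prop := p.1 < q.1 ∧ q.1 < p.2 ∧ p.2 < q.2

/-- `q` is the immediate right neighbor of `p` among the intervals of `I`:
`q` overlaps `p` on the right and, among all such intervals, has the leftmost
left endpoint. -/
def ImmRight (I : Finset (ℝ × ℝ)) (p q : ℝ × ℝ) : Prop :=
  q ∈ I ∧ Ov p q ∧ ∀ r ∈ I, Ov p r → q.1 ≤ r.1

/-- `q` is the immediate left neighbor of `p` among the intervals of `I`: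
`q` overlaps `p` on the left and, among all such intervals, has the rightmost
right endpoint. -/
def ImmLeft (I : Finset (ℝ × ℝ)) (p q : ℝ × ℝ) : Prop :=
  q ∈ I ∧ Ov q p ∧ ∀ r ∈ I, Ov r p → r.2 ≤ q.2

private lemma adj_of_rel {I : Finset (ℝ × ℝ)} {u v : ↥I}
    (hne : u.val ≠ v.val)
    (h : ImmRight I u.val v.val ∨ ImmLeft I u.val v.val) :
    (SimpleGraph.fromRel
      (fun u v : ↥I => ImmRight I u.val v.val ∨ ImmLeft I u.val v.val)).Adj u v := by
  rw [SimpleGraph.fromRel_adj]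
  exact ⟨fun he => hne (congrArg Subtype.val he), Or.inl h⟩

private lemma key (I : Finset (ℝ × ℝ))
    (hdist : ∀ p ∈ I, ∀ q ∈ I, p ≠ q →
      p.1 ≠ q.1 ∧ p.1 ≠ q.2 ∧ p.2 ≠ q.1 ∧ p.2 ≠ q.2) :
    ∀ n : ℕ, ∀ p q : ↥I,
      (I.filter (fun r => r.1 < (q : ℝ × ℝ).1)).card
        + (I.filter (fun r => (p : ℝ × ℝ).2 < r.2)).card ≤ n →
      Ov p.val q.val →
      (SimpleGraph.fromRel
        (fun u v : ↥I => ImmRight I u.val v.val ∨ ImmLeft I u.val v.val)).Reachable p q := by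
  intro n
  induction n with
  | zero =>
    intro p q hμ hov
    exfalso
    have h1 : (0:ℕ) < (I.filter (fun r => r.1 < (q : ℝ × ℝ).1)).card :=
      Finset.card_pos.mpr ⟨p.val, Finset.mem_filter.mpr ⟨p.2, hov.1⟩⟩
    omega
  | succ n ih =>
    intro p q hμ hov
    classical
    -- immediate right neighbor of p
    have hRne : (I.filter (fun r => Ov p.val r)).Nonempty :=
      ⟨q.val, Finset.mem_filter.mpr ⟨q.2, hov⟩⟩
    obtain ⟨q', hq'mem, hq'min⟩ := Finset.exists_min_image _ (fun r => r.1) hRne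
    have hq'I : q' ∈ I := (Finset.mem_filter.mp hq'mem).1
    have hovq' : Ov p.val q' := (Finset.mem_filter.mp hq'mem).2
    have himm : ImmRight I p.val q' :=
      ⟨hq'I, hovq', fun r hr hO => hq'min r (Finset.mem_filter.mpr ⟨hr, hO⟩)⟩
    set Q' : ↥I := ⟨q', hq'I⟩ with hQ'
    have hQv : (Q' : ℝ × ℝ) = q' := rfl
    have hadj1 : (SimpleGraph.fromRel
        (fun u v : ↥I => ImmRight I u.val v.val ∨ ImmLeft I u.val v.val)).Adj p Q' :=
      adj_of_rel (fun h => (ne_of_lt hovq'.1) (congrArg Prod.fst h)) (Or.inl himm)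
    by_cases hq'q : q' = q.val
    · have : Q' = q := Subtype.ext hq'q
      exact this ▸ hadj1.reachable
    · have hq'1 : q'.1 < q.val.1 :=
        lt_of_le_of_ne (hq'min q.val (Finset.mem_filter.mpr ⟨q.2, hov⟩))
          ((hdist q' hq'I q.val q.2 hq'q).1)
      rcases ((hdist q' hq'I q.val q.2 hq'q).2.2.2).lt_or_gt with hA | hB
      · -- Case A : q'.2 < q.2, so Ov q' q; recurse on (Q', q)
        have hovA : Ov q' q.val := ⟨hq'1, lt_trans hov.2.1 hovq'.2.2, hA⟩
        have hsub : I.filter (fun r => q'.2 < r.2) ⊆ I.filter (fun r => p.val.2 < r.2) :=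
          fun r hr => Finset.mem_filter.mpr ⟨(Finset.mem_filter.mp hr).1,
            lt_trans hovq'.2.2 (Finset.mem_filter.mp hr).2⟩
      
        have hlt : (I.filter (fun r => q'.2 < r.2)).card
            < (I.filter (fun r => p.val.2 < r.2)).card :=
          Finset.card_lt_card ((Finset.ssubset_iff_of_subset hsub).mpr
            ⟨q', Finset.mem_filter.mpr ⟨hq'I, hovq'.2.2⟩,
              fun hmem => lt_irrefl _ (Finset.mem_filter.mp hmem).2⟩)
        exact hadj1.reachable.trans (ih Q' q (by rw [hQv]; omega) hovA)
      · -- Case B : q.2 < q'.2, containment. Use immediate left neighbor of q.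
        have hLne : (I.filter (fun r => Ov r q.val)).Nonempty :=
          ⟨p.val, Finset.mem_filter.mpr ⟨p.2, hov⟩⟩
        obtain ⟨p'', hp''mem, hp''max⟩ := Finset.exists_max_image _ (fun r => r.2) hLne
        have hp''I : p'' ∈ I := (Finset.mem_filter.mp hp''mem).1
        have hovp'' : Ov p'' q.val := (Finset.mem_filter.mp hp''mem).2
        have himmL : ImmLeft I q.val p'' :=
          ⟨hp''I, hovp'', fun r hr hO => hp''max r (Finset.mem_filter.mpr ⟨hr, hO⟩)⟩
        set P'' : ↥I := ⟨p'', hp''I⟩ with hP''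
        have hPv : (P'' : ℝ × ℝ) = p'' := rfl
        have hadj2 : (SimpleGraph.fromRel
            (fun u v : ↥I => ImmRight I u.val v.val ∨ ImmLeft I u.val v.val)).Adj q P'' :=
          adj_of_rel (fun h => (ne_of_lt hovp''.1) (congrArg Prod.fst h.symm)) (Or.inr himmL)
        by_cases hp''p : p'' = p.val
        · have : P'' = p := Subtype.ext hp''p
          exact (this ▸ hadj2).symm.reachable
        · have hp''2 : p.val.2 < p''.2 :=
            lt_of_le_of_ne (hp''max p.val (Finset.mem_filter.mpr ⟨p.2, hov⟩))
              (Ne.symm (hdist p'' hp''I p.val p.2 hp''p).2.2.2)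
          rcases ((hdist p'' hp''I p.val p.2 hp''p).1).lt_or_gt with hB2 | hB1
          · -- Case B2 : p''.1 < p.1, so Ov p'' q'; recurse on (P'', Q')
            have hovB2 : Ov p'' q' :=
              ⟨lt_trans hB2 hovq'.1, lt_trans hovq'.2.1 hp''2, lt_trans hovp''.2.2 hB⟩
            have hsub1 : I.filter (fun r => r.1 < q'.1) ⊆ I.filter (fun r => r.1 < q.val.1) :=
              fun r hr => Finset.mem_filter.mpr ⟨(Finset.mem_filter.mp hr).1,
                lt_trans (Finset.mem_filter.mp hr).2 hq'1⟩
            have hlt1 : (I.filter (fun r => r.1 < q'.1)).card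
                < (I.filter (fun r => r.1 < q.val.1)).card :=
              Finset.card_lt_card ((Finset.ssubset_iff_of_subset hsub1).mpr
                ⟨q', Finset.mem_filter.mpr ⟨hq'I, hq'1⟩,
                  fun hmem => lt_irrefl _ (Finset.mem_filter.mp hmem).2⟩)
            have hsub2 : I.filter (fun r => p''.2 < r.2) ⊆ I.filter (fun r => p.val.2 < r.2) :=
              fun r hr => Finset.mem_filter.mpr ⟨(Finset.mem_filter.mp hr).1,
                lt_trans hp''2 (Finset.mem_filter.mp hr).2⟩
            have hle2 := Finset.card_le_card hsub2
            have hreach := ih P'' Q' (by rw [hQv, hPv]; omega) hovB2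
            exact hadj1.reachable.trans (hreach.symm.trans hadj2.symm.reachable)
          · -- Case B1 : p.1 < p''.1, so Ov p p''; recurse on (p, P'')
            have hovB1 : Ov p.val p'' := ⟨hB1, lt_trans hovp''.1 hov.2.1, hp''2⟩
            have hsub1 : I.filter (fun r => r.1 < p''.1) ⊆ I.filter (fun r => r.1 < q.val.1) :=
              fun r hr => Finset.mem_filter.mpr ⟨(Finset.mem_filter.mp hr).1,
                lt_trans (Finset.mem_filter.mp hr).2 hovp''.1⟩
            have hlt1 : (I.filter (fun r => r.1 < p''.1)).card
                < (I.filter (fun r => r.1 < q.val.1)).card :=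
              Finset.card_lt_card ((Finset.ssubset_iff_of_subset hsub1).mpr
                ⟨p'', Finset.mem_filter.mpr ⟨hp''I, hovp''.1⟩,
                  fun hmem => lt_irrefl _ (Finset.mem_filter.mp hmem).2⟩)
            have hreach := ih p P'' (by rw [hPv]; omega) hovB1
            exact hreach.trans hadj2.symm.reachable

/-- For a finite set of real intervals with pairwise distinct endpoints, the
graph joining each interval to its immediate left and immediate right neighbor
(when they exist) has exactly the same connected components as the full
overlap graph. -/
theorem stmt_12 (I : Finset (ℝ × ℝ))
    (hord : ∀ p ∈ I, p.1 < p.2)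
    (hdist : ∀ p ∈ I, ∀ q ∈ I, p ≠ q →
      p.1 ≠ q.1 ∧ p.1 ≠ q.2 ∧ p.2 ≠ q.1 ∧ p.2 ≠ q.2) :
    ∀ a b : ↥I,
      (SimpleGraph.fromRel
          (fun u v : ↥I => ImmRight I u.val v.val ∨ ImmLeft I u.val v.val)).Reachable a b ↔
      (SimpleGraph.fromRel (fun u v : ↥I => Ov u.val v.val)).Reachable a b := by
  classical
  intro a b
  constructor
  · apply SimpleGraph.Reachable.mono
    intro u v huv
    rw [SimpleGraph.fromRel_adj] at huv ⊢
    obtain ⟨hne, h⟩ := huv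
    refine ⟨hne, ?_⟩
    rcases h with (⟨_, h, _⟩ | ⟨_, h, _⟩) | (⟨_, h, _⟩ | ⟨_, h, _⟩)
    · exact Or.inl h
    · exact Or.inr h
    · exact Or.inr h
    · exact Or.inl h
  · intro h
    obtain ⟨w⟩ := h
    induction w with
    | nil => exact SimpleGraph.Reachable.refl _
    | cons hadj _ ihw =>
      refine SimpleGraph.Reachable.trans ?_ ihw
      rw [SimpleGraph.fromRel_adj] at hadj
      rcases hadj.2 with hO | hO
      · exact key I hdist _ _ _ le_rfl hO
      · exact (key I hdist _ _ _ le_rfl hO).symm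
end

section
/- In the chain decomposition of a 2-edge-connected graph G with DFS tree T rooted at r, for every chain C the source s(C) is an ancestor of the target t(C) in T. -/
open SimpleGraph

variable {V : Type*} [Fintype V] [DecidableEq V]

/-- A chain decomposition of `G` with respect to the DFS tree `t`.

Vertices are processed in DFS order (recorded by the numbering `num`); when a
vertex `v = src i` is processed, each back-edge `s(src i, low i)` starting at it
generates the chain `Cᵢ`, which consists of this back-edge together with the
tree path from `low i` upward until the first already visited vertex `tgt i`.
A vertex counts as visited (just before chain `i` is built) if its DFS number
is at most that of `src i`, or if it lies on an earlier chain `Cⱼ`, `j < i`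
(i.e. it equals `src j` or lies on the tree path from `low j` up to `tgt j`). -/
structure ChainDecomp (G : SimpleGraph V) (t : DFSTree G) where
  /-- the DFS (discovery) numbering of the vertices -/
  num : V → ℕ
  num_inj : Function.Injective num
  num_parent : ∀ v, v ≠ t.root → num (t.parent v) < num v
  /-- number of chains -/
  k : ℕ
  /-- `src i = s(Cᵢ)`, the source (upper endpoint of the back-edge) of chain `i` -/
  src : Fin k → V
  /-- `low i`, the lower endpoint of the back-edge of chain `i` -/
  low : Fin k → V
  /-- `tgt i = t(Cᵢ)`, the target of chain `i` -/
  tgt : Fin k → V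
  back_adj : ∀ i, G.Adj (src i) (low i)
  back_anc : ∀ i, t.Anc (src i) (low i)
  back_nontree : ∀ i, ¬ t.TreeEdge s(src i, low i)
  /-- distinct chains come from distinct back-edges -/
  back_inj : ∀ i j, s(src i, low i) = s(src j, low j) → i = j
  /-- every back-edge of `G` generates a chain -/
  back_surj : ∀ e ∈ G.edgeSet, ¬ t.TreeEdge e → ∃ i, e = s(src i, low i)
  /-- chains are generated in DFS order of their sources -/
  ordered : ∀ i j : Fin k, i ≤ j → num (src i) ≤ num (src j)
  /-- the target lies on the tree path from `low i` to the root -/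
  tgt_anc : ∀ i, t.Anc (tgt i) (low i)
  /-- the target is visited when chain `i` is built -/
  tgt_visited : ∀ i : Fin k,
    num (tgt i) ≤ num (src i) ∨
    ∃ j : Fin k, j < i ∧
      (tgt i = src j ∨ (t.Anc (tgt j) (tgt i) ∧ t.Anc (tgt i) (low j)))
  /-- the target is the *first* visited vertex on the way up: no vertex strictly
  between `low i` and `tgt i` is visited when chain `i` is built -/
  path_unvisited : ∀ i : Fin k, ∀ u : V,
    t.Anc (tgt i) u → t.Anc u (low i) → u ≠ tgt i →
    num (src i) < num u ∧
    ∀ j : Fin k, j < i →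
      ¬ (u = src j ∨ (t.Anc (tgt j) u ∧ t.Anc u (low j)))

/-- The edges of chain `i`: its back-edge together with the tree edges on the
tree path from `low i` up to `tgt i`. -/
def ChainDecomp.chainEdges {G : SimpleGraph V} {t : DFSTree G}
    (cd : ChainDecomp G t) (i : Fin cd.k) : Set (Sym2 V) :=
  {s(cd.src i, cd.low i)} ∪
  {e | ∃ u : V, u ≠ cd.tgt i ∧ t.Anc (cd.tgt i) u ∧ t.Anc u (cd.low i) ∧
    e = s(u, t.parent u)}

/-- Vertex `v` s-belongs to chain `i`: either `v` is the root and `i` is the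
first chain, or the tree edge from `v` to its parent lies on chain `i`. -/
def ChainDecomp.SBelongs {G : SimpleGraph V} {t : DFSTree G}
    (cd : ChainDecomp G t) (v : V) (i : Fin cd.k) : Prop :=
  (v = t.root ∧ (i : ℕ) = 0) ∨
  (v ≠ t.root ∧ s(v, t.parent v) ∈ cd.chainEdges i)

/-- In the chain decomposition of a 2-edge-connected graph, the source of every
chain is an ancestor of its target. -/
theorem stmt_16 (G : SimpleGraph V) (t : DFSTree G) (cd : ChainDecomp G t)
    (h2 : EdgeConnGE G 2) (i : Fin cd.k) :
    t.Anc (cd.src i) (cd.tgt i) := by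
  obtain ⟨m, hm⟩ := cd.back_anc i
  obtain ⟨n, hn⟩ := cd.tgt_anc i
  rcases le_total n m with h | h
  · exact ⟨m - n, by rw [← hn, ← Function.iterate_add_apply, Nat.sub_add_cancel h, hm]⟩
  · by_cases heq : cd.src i = cd.tgt i
    · exact ⟨0, heq.symm⟩
    · exfalso
      have hanc : t.Anc (cd.tgt i) (cd.src i) :=
        ⟨n - m, by rw [← hm, ← Function.iterate_add_apply, Nat.sub_add_cancel h, hn]⟩
      exact lt_irrefl _ (cd.path_unvisited i (cd.src i) hanc ⟨m, hm⟩ heq).1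
end
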